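/- arXiv:2409.18421 — 3 statements merged into one kernel-verified Lean document; each statement's English description precedes it below -/
import Mathlib

section
/- Every Bessel polynomial $p_n(x)$ (defined by $p_0 = 1$, $p_1(x) = x+1$, $p_n(x) = (2n-1)x\,p_{n-1}(x) + p_{n-2}(x)$) is coprime with its derivative; equivalently, all complex roots of $p_n$ are simple. -/
/-!
Consecutive Bessel polynomials are coprime, since the recurrence is a Euclidean step:
`pₙ₊₂ ≡ pₙ (mod pₙ₊₁)`. They also satisfy `x² p'ₙ₊₁ = ((n+1)x - 1) pₙ₊₁ + pₙ`, so `pₙ₊₁` is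
coprime to `x² p'ₙ₊₁ ≡ pₙ (mod pₙ₊₁)`, hence to `p'ₙ₊₁`.
-/

noncomputable section

open Polynomial

/-- The Bessel polynomials over `ℂ`: `p₀ = 1`, `p₁(x) = x + 1`,
`pₙ(x) = (2n-1) x pₙ₋₁(x) + pₙ₋₂(x)`. -/
def besselP : ℕ → Polynomial ℂ
  | 0 => 1
  | 1 => X + 1
  | (n + 2) => C (2 * ((n : ℂ) + 2) - 1) * X * besselP (n + 1) + besselP n

lemma besselP_succ_succ (n : ℕ) :
    besselP (n + 2) = (2 * (n : ℂ[X]) + 3) * X * besselP (n + 1) + besselP n := by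
  rw [besselP]
  congr 2
  simp only [map_sub, map_mul, map_add, map_natCast, map_ofNat, map_one]
  ring

lemma isCoprime_besselP_succ : ∀ n : ℕ, IsCoprime (besselP (n + 1)) (besselP n)
  | 0 => isCoprime_one_right
  | n + 1 => by
    rw [besselP_succ_succ, add_comm, mul_comm]
    exact (isCoprime_besselP_succ n).symm.add_mul_left_left _

lemma X_sq_mul_derivative_besselP_succ : ∀ n : ℕ,
    X ^ 2 * derivative (besselP (n + 1))
      = (((n : ℂ[X]) + 1) * X - 1) * besselP (n + 1) + besselP n
  | 0 => by
    simp only [besselP, derivative_add, derivative_X, derivative_one, Nat.cast_zero]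
    ring
  | 1 => by
    rw [besselP_succ_succ]
    simp only [besselP, derivative_add, derivative_mul, derivative_X, derivative_one,
      derivative_ofNat, derivative_zero, Nat.cast_zero]
    ring
  | n + 2 => by
    have ih₁ := X_sq_mul_derivative_besselP_succ (n + 1)
    have ih₀ := X_sq_mul_derivative_besselP_succ n
    have hrec := besselP_succ_succ n
    rw [besselP_succ_succ (n + 1)]
    simp only [derivative_add, derivative_mul, derivative_natCast, derivative_ofNat,
      derivative_X]
    push_cast at ih₁ ⊢
    linear_combination ((2 * (n : ℂ[X]) + 5) * X) * ih₁ + ih₀ - hrec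

lemma separable_besselP : ∀ n : ℕ, (besselP n).Separable
  | 0 => separable_one
  | n + 1 => by
    have h : IsCoprime (besselP (n + 1)) (X ^ 2 * derivative (besselP (n + 1))) := by
      rw [X_sq_mul_derivative_besselP_succ]
      exact (isCoprime_besselP_succ n).mul_add_right_right _
    exact h.of_mul_right_right

/-- Every Bessel polynomial is coprime with its derivative; equivalently,
all complex roots of `pₙ` are simple (a classical result of Grosswald). -/
theorem besselP_coprime_derivative (n : ℕ) :
    IsCoprime (besselP n) (derivative (besselP n)) ∧
      ∀ z : ℂ, (besselP n).rootMultiplicity z ≤ 1 :=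
  ⟨separable_besselP n, rootMultiplicity_le_one_of_separable (separable_besselP n)⟩
end
end

section
/- In the free abelian group $\mathrm{Pic}$ generated by classes $L$ and $E_{i,j}$ with diagonal intersection pairing $L^2 = 1$, $E_{i,j}^2 = -1$, $L \cdot E_{i,j} = 0$, $E_{i,j}\cdot E_{i',j'} = 0$ for $(i,j) \neq (i',j')$, let $H = (2d-1)L - (d-1)E_{1,1} - (d-1)E_{1,2} - \sum_{j=3}^{d+1} E_{1,j} - dE_2 - \sum_{i=3}^{d+1} E_i$. Then $H^2 = (d-1)^2$. -/
noncomputable section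

/-- Index type for the generators of the Picard group of the blowup surface
resolving the inverse Gaussian moment parametrization: `Sum.inl ()` is the class
`L` of a line, `Sum.inr (Sum.inl j)` is `E_{1,j+1}` for `j = 0, …, d`, and
`Sum.inr (Sum.inr i)` is `E_{i+2}` for `i = 0, …, d-1`. -/
abbrev PicIG (d : ℕ) := Unit ⊕ (Fin (d + 1) ⊕ Fin d)

/-- The diagonal intersection pairing: `L² = 1`, `E² = -1`, distinct generators
orthogonal. -/
def interIG (d : ℕ) (x y : PicIG d → ℤ) : ℤ :=
  x (Sum.inl ()) * y (Sum.inl ())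
    - ∑ j : Fin (d + 1), x (Sum.inr (Sum.inl j)) * y (Sum.inr (Sum.inl j))
    - ∑ i : Fin d, x (Sum.inr (Sum.inr i)) * y (Sum.inr (Sum.inr i))

/-- The class `H = (2d-1)L - (d-1)E_{1,1} - (d-1)E_{1,2} - E_{1,3} - ⋯ - E_{1,d+1}
- d E₂ - E₃ - ⋯ - E_{d+1}` of the pullback of a hyperplane section. -/
def Hig (d : ℕ) : PicIG d → ℤ :=
  Sum.elim (fun _ => 2 * (d : ℤ) - 1)
    (Sum.elim (fun j => if (j : ℕ) ≤ 1 then -((d : ℤ) - 1) else -1)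
      (fun i => if (i : ℕ) = 0 then -(d : ℤ) else -1))

theorem Fin.sum_ite_val_eq_zero {M : Type*} [AddCommMonoid M] (n : ℕ) (a b : M) :
    ∑ i : Fin (n + 1), (if (i : ℕ) = 0 then a else b) = a + n • b := by
  simp [Fin.sum_univ_succ]

theorem Fin.sum_ite_val_le_one {M : Type*} [AddCommMonoid M] (n : ℕ) (a b : M) :
    ∑ j : Fin (n + 2), (if (j : ℕ) ≤ 1 then a else b) = 2 • a + n • b := by
  simp [Fin.sum_univ_succ, Fin.val_succ, two_nsmul, add_assoc]

/-- Self-intersection of the hyperplane class: `H² = (d-1)²`, the degree of the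
inverse Gaussian moment variety. -/
theorem Hig_self_intersection (d : ℕ) (hd : 2 ≤ d) :
    interIG d (Hig d) (Hig d) = ((d : ℤ) - 1) ^ 2 := by
  obtain ⟨k, rfl⟩ : ∃ k, d = k + 1 := ⟨d - 1, by omega⟩
  simp only [interIG, Hig, Sum.elim_inl, Sum.elim_inr, ite_mul_ite,
    Fin.sum_ite_val_le_one, Fin.sum_ite_val_eq_zero, nsmul_eq_mul]
  -- (2d-1)² - 2(d-1)² - (d-1) - d² - (d-1) = (d-1)², written in k = d - 1
  push_cast
  ring
end
end

section
/- In the free abelian group with orthogonal basis $\{L, E_{1,1}, E_{1,2}, E_2, \ldots\}$ and pairing $L^2=1$, $E^2 = -1$ for each exceptional class, let $A' = A - m(L - E_{1,1} - E_2) - m'(L - E_{1,1} - E_{1,2}) - m''(E_{1,1} - E_{1,2})$ where $A = (2d-1-2k)L - (d-1)E_{1,1} - dE_2 - (d-1)E_{1,2} - \cdots$. If $A' \cdot (E_{1,1}-E_{1,2}) \geq 0$, $A' \cdot (L - E_{1,1} - E_{1,2}) \geq 0$, $A' \cdot (L - E_{1,1} - E_2) \geq 0$, and $A' \cdot L \geq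 0$, then $d \geq 4k$. -/
/-!
Pairing `A'` with the four test classes gives `m ≤ 2m''`, `2k - 1 ≤ m'`, `2k + m'' ≤ m` and
`2k + m + m' + 1 ≤ 2d`. The first and third give `m ≥ 2k + m/2`, i.e. `m ≥ 4k`; with the second,
the last becomes `2d ≥ 8k`.
-/

noncomputable section

/-- Generators of the Picard group used in the inverse Gaussian case `a = 1`,
`b₁ = b₂ = 0`: index `Sum.inl 0` is `L`, `Sum.inl 1` is `E_{1,1}`, `Sum.inl 2` is
`E_{1,2}`, `Sum.inl 3` is `E₂`, and `Sum.inr` indexes the remaining exceptional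
classes. -/
abbrev PicIdx (ι' : Type*) := Fin 4 ⊕ ι'

/-- The diagonal intersection pairing: `L² = 1`, each exceptional class squares to
`-1`, distinct generators orthogonal. -/
def inter {ι' : Type*} [Fintype ι'] (x y : PicIdx ι' → ℤ) : ℤ :=
  ∑ i : PicIdx ι',
    (Sum.elim (fun j : Fin 4 => if j = 0 then (1 : ℤ) else -1) (fun _ => -1) i) * x i * y i

theorem inter_sum_elim_zero_right {ι' : Type*} [Fintype ι'] (x : PicIdx ι' → ℤ) (v : Fin 4 → ℤ) :
    inter x (Sum.elim v fun _ => 0) =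
      x (Sum.inl 0) * v 0 - x (Sum.inl 1) * v 1 - x (Sum.inl 2) * v 2 - x (Sum.inl 3) * v 3 := by
  simp only [inter, Fintype.sum_sum_type, Fin.sum_univ_four, Sum.elim_inl, Sum.elim_inr,
    mul_zero, Finset.sum_const_zero, add_zero]
  simp only [Fin.isValue, ↓reduceIte, Fin.reduceEq]
  ring

theorem four_mul_le_of_pairing_bounds {d k m m' m'' : ℤ} (h₁ : m ≤ 2 * m'')
    (h₂ : 2 * k - 1 ≤ m') (h₃ : 2 * k + m'' ≤ m) (h₄ : 2 * k + m + m' + 1 ≤ 2 * d) :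
    4 * k ≤ d := by
  have hm : 4 * k ≤ m := by linarith
  linarith

/-- If `A' = A - m(L - E_{1,1} - E₂) - m'(L - E_{1,1} - E_{1,2}) - m''(E_{1,1} - E_{1,2})`,
where `A = (2d-1-2k)L - (d-1)E_{1,1} - dE₂ - (d-1)E_{1,2} - ⋯`, has nonnegative
intersection with `E_{1,1} - E_{1,2}`, `L - E_{1,1} - E_{1,2}`, `L - E_{1,1} - E₂`
and `L`, then `d ≥ 4k`. -/
theorem ig_stripping_forces_d_ge_4k {ι' : Type*} [Fintype ι']
    (d k m m' m'' : ℤ) (A : PicIdx ι' → ℤ)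
    (hA0 : A (Sum.inl 0) = 2 * d - 1 - 2 * k)
    (hA1 : A (Sum.inl 1) = -(d - 1))
    (hA2 : A (Sum.inl 2) = -(d - 1))
    (hA3 : A (Sum.inl 3) = -d)
    (v1 : PicIdx ι' → ℤ) (hv1 : v1 = Sum.elim ![1, -1, 0, -1] (fun _ => 0))
    (v2 : PicIdx ι' → ℤ) (hv2 : v2 = Sum.elim ![1, -1, -1, 0] (fun _ => 0))
    (v3 : PicIdx ι' → ℤ) (hv3 : v3 = Sum.elim ![0, 1, -1, 0] (fun _ => 0))
    (eL : PicIdx ι' → ℤ) (heL : eL = Sum.elim ![1, 0, 0, 0] (fun _ => 0))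
    (A' : PicIdx ι' → ℤ)
    (hA' : A' = fun x => A x - m * v1 x - m' * v2 x - m'' * v3 x)
    (h1 : 0 ≤ inter A' v3) (h2 : 0 ≤ inter A' v2)
    (h3 : 0 ≤ inter A' v1) (h4 : 0 ≤ inter A' eL) :
    4 * k ≤ d := by
  subst hv1 hv2 hv3 heL hA'
  simp only [inter_sum_elim_zero_right, Sum.elim_inl, Matrix.cons_val, hA0, hA1, hA2, hA3] at h1 h2 h3 h4
  exact four_mul_le_of_pairing_bounds (m := m) (m' := m') (m'' := m'')
    (by linarith) (by linarith) (by linarith) (by linarith)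
end
end
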